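/- For every integer n ≥ 2 and every f ∈ F_n one has φ_n(f(x)) = φ_n(x) for all x ∈ ℤ[1/n]; consequently every element of F_n (and hence every element of BPL_n(ℝ)) maps each coset of Δ_n in ℤ[1/n] onto itself. -/

import Mathlib

noncomputable section

/-- `ℤ[1/n]` realized as a subset of `ℝ`: all reals of the form `a * n^b` with `a b : ℤ`. -/
def zpows (n : ℕ) : Set ℝ := {x : ℝ | ∃ a b : ℤ, x = (a : ℝ) * (n : ℝ) ^ b}

/-- The defining properties of the (unique) ring homomorphism `φₙ : ℤ[1/n] → ℤ/(n-1)ℤ`,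
expressed for a function `φ : ℝ → ZMod (n-1)` restricted to the subset `zpows n`. -/
def IsPhi (n : ℕ) (φ : ℝ → ZMod (n - 1)) : Prop :=
  (∀ x ∈ zpows n, ∀ y ∈ zpows n, φ (x + y) = φ x + φ y) ∧
  (∀ x ∈ zpows n, ∀ y ∈ zpows n, φ (x * y) = φ x * φ y) ∧
  φ 1 = 1

/-- `B` is a discrete subset of `ℝ`: every point of `ℝ` has a neighborhood containing
at most one point of `B`. -/
def LocDiscrete (B : Set ℝ) : Prop := ∀ x : ℝ, ∃ ε > 0, ∀ y ∈ B, |y - x| < ε → y = x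

/-- Membership in `PLₙ(ℝ)`: an orientation-preserving homeomorphism of `ℝ`
(equivalently, a strictly monotone surjection), piecewise linear with breaks in a
discrete subset of `ℤ[1/n]`, all slopes integral powers of `n`, and mapping `ℤ[1/n]`
into itself. -/
def MemPL (n : ℕ) (f : ℝ → ℝ) : Prop :=
  StrictMono f ∧ Function.Surjective f ∧
  (∃ B : Set ℝ, B ⊆ zpows n ∧ LocDiscrete B ∧
    ∀ x ∉ B, ∃ (k : ℤ) (c : ℝ), ∃ ε > 0, ∀ y : ℝ, |y - x| < ε → f y = (n : ℝ) ^ k * y + c) ∧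
  (∀ q ∈ zpows n, f q ∈ zpows n)

/-- Membership in `BPLₙ(ℝ)`: elements of `PLₙ(ℝ)` with bounded support. -/
def MemBPL (n : ℕ) (f : ℝ → ℝ) : Prop :=
  MemPL n f ∧ ∃ M : ℝ, ∀ x : ℝ, M < |x| → f x = x

/-- Membership in `Fₙ`: elements of `PLₙ(ℝ)` that are translation by `i(n-1)` near `+∞`
and by `j(n-1)` near `-∞`. -/
def MemF (n : ℕ) (f : ℝ → ℝ) : Prop :=
  MemPL n f ∧ ∃ (i j : ℤ) (M : ℝ),
    (∀ x : ℝ, M < x → f x = x + (i : ℝ) * ((n : ℝ) - 1)) ∧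
    (∀ x : ℝ, x < -M → f x = x + (j : ℝ) * ((n : ℝ) - 1))

/-! The defect `x ↦ φ (f x) - φ x` is constant on `ℤ[1/n]`: between two consecutive breaks
the difference quotient of `f` is some `n ^ k` (mean value theorem), and `φ (n ^ k) = 1` because
`n ≡ 1 [MOD n - 1]`. Since the breaks lie in `ℤ[1/n]` and only finitely many of them lie in a
bounded interval, the defect everywhere equals its value far to the right, where `f` is
translation by `i (n - 1) ∈ Δₙ`, i.e. zero. For surjectivity onto each coset, `f⁻¹` preserves
`ℤ[1/n]` too: near a point that is not a break, `f` is `y ↦ n ^ k * y + c`, and `c ∈ ℤ[1/n]`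
because some nearby `y` lies in the dense set `ℤ[1/n]`. -/

open Set

section zpows

variable {n : ℕ} {x y : ℝ}

theorem intCast_mem_zpows (a : ℤ) : (a : ℝ) ∈ zpows n := ⟨a, 0, by simp⟩

theorem zero_mem_zpows : (0 : ℝ) ∈ zpows n := by exact_mod_cast intCast_mem_zpows 0

theorem one_mem_zpows : (1 : ℝ) ∈ zpows n := by exact_mod_cast intCast_mem_zpows 1

theorem natCast_mem_zpows (m : ℕ) : (m : ℝ) ∈ zpows n := by
  exact_mod_cast intCast_mem_zpows (m : ℤ)

theorem zpow_mem_zpows (k : ℤ) : (n : ℝ) ^ k ∈ zpows n := ⟨1, k, by simp⟩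

theorem neg_mem_zpows (hx : x ∈ zpows n) : -x ∈ zpows n := by
  obtain ⟨a, b, rfl⟩ := hx
  exact ⟨-a, b, by push_cast; ring⟩

theorem mul_mem_zpows (hn : n ≠ 0) (hx : x ∈ zpows n) (hy : y ∈ zpows n) : x * y ∈ zpows n := by
  obtain ⟨a, b, rfl⟩ := hx
  obtain ⟨c, d, rfl⟩ := hy
  exact ⟨a * c, b + d, by push_cast; rw [zpow_add₀ (Nat.cast_ne_zero.2 hn)]; ring⟩

theorem add_mem_zpows (hn : n ≠ 0) (hx : x ∈ zpows n) (hy : y ∈ zpows n) : x + y ∈ zpows n := by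
  obtain ⟨a, b, rfl⟩ := hx
  obtain ⟨c, d, rfl⟩ := hy
  wlog hbd : b ≤ d generalizing a b c d
  · rw [add_comm]
    exact this c d a b (le_of_not_ge hbd)
  obtain ⟨p, hp⟩ := Int.eq_ofNat_of_zero_le (sub_nonneg.2 hbd)
  refine ⟨a + c * n ^ p, b, ?_⟩
  rw [show d = p + b by omega, zpow_add₀ (Nat.cast_ne_zero.2 hn), zpow_natCast]
  push_cast
  ring

theorem sub_mem_zpows (hn : n ≠ 0) (hx : x ∈ zpows n) (hy : y ∈ zpows n) : x - y ∈ zpows n := by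
  rw [sub_eq_add_neg]
  exact add_mem_zpows hn hx (neg_mem_zpows hy)

theorem exists_mem_zpows_abs_sub_lt (hn : 1 < n) (x : ℝ) {ε : ℝ} (hε : 0 < ε) :
    ∃ q ∈ zpows n, |q - x| < ε := by
  obtain ⟨m, hm⟩ := exists_pow_lt_of_lt_one hε (inv_lt_one_of_one_lt₀ (Nat.one_lt_cast.2 hn))
  have hpos : (0 : ℝ) < n ^ m := by positivity
  refine ⟨⌊x * n ^ m⌋ * (n : ℝ) ^ (-(m : ℤ)), ⟨_, _, rfl⟩, ?_⟩
  have hdiff : x - ⌊x * n ^ m⌋ * (n : ℝ) ^ (-(m : ℤ)) = Int.fract (x * n ^ m) / n ^ m := by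
    rw [Int.fract, zpow_neg, zpow_natCast]
    field_simp
  rw [abs_sub_comm, hdiff, abs_of_nonneg (by positivity)]
  calc Int.fract (x * n ^ m) / n ^ m < 1 / n ^ m := by gcongr; exact Int.fract_lt_one _
    _ = (n : ℝ)⁻¹ ^ m := by rw [inv_pow, one_div]
    _ < ε := hm

end zpows

namespace IsPhi

variable {n : ℕ} {φ : ℝ → ZMod (n - 1)} {x y u v : ℝ}

theorem map_zero (hφ : IsPhi n φ) : φ 0 = 0 := by
  have h := hφ.1 0 zero_mem_zpows 0 zero_mem_zpows
  rw [add_zero] at h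
  exact left_eq_add.1 h

theorem map_natCast (hφ : IsPhi n φ) (m : ℕ) : φ m = m := by
  induction m with
  | zero => simpa using hφ.map_zero
  | succ m ih =>
    push_cast
    rw [hφ.1 _ (natCast_mem_zpows m) _ one_mem_zpows, ih, hφ.2.2]

theorem map_sub (hn : n ≠ 0) (hφ : IsPhi n φ) (hx : x ∈ zpows n) (hy : y ∈ zpows n) :
    φ (x - y) = φ x - φ y := by
  have h := hφ.1 _ (sub_mem_zpows hn hx hy) _ hy
  rw [sub_add_cancel] at h
  exact eq_sub_of_add_eq h.symm

theorem map_natCast_sub_one (hn : n ≠ 0) (hφ : IsPhi n φ) : φ ((n : ℝ) - 1) = 0 := by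
  rw [← Nat.cast_pred (Nat.pos_of_ne_zero hn), hφ.map_natCast, ZMod.natCast_self]

theorem map_natCast_self (hn : n ≠ 0) (hφ : IsPhi n φ) : φ n = 1 := by
  have h := hφ.1 _ (sub_mem_zpows hn (natCast_mem_zpows n) one_mem_zpows) _ one_mem_zpows
  rwa [sub_add_cancel, hφ.map_natCast_sub_one hn, hφ.2.2, zero_add] at h

theorem map_zpow (hn : n ≠ 0) (hφ : IsPhi n φ) (k : ℤ) : φ ((n : ℝ) ^ k) = 1 := by
  have hsucc : ∀ k : ℤ, φ ((n : ℝ) ^ (k + 1)) = φ ((n : ℝ) ^ k) := fun k => by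
    rw [zpow_add_one₀ (Nat.cast_ne_zero.2 hn), hφ.2.1 _ (zpow_mem_zpows k) _ (natCast_mem_zpows n),
      hφ.map_natCast_self hn, mul_one]
  induction k using Int.induction_on with
  | zero => simpa using hφ.2.2
  | succ k ih => rw [hsucc, ih]
  | pred k ih => rw [← ih, ← hsucc, sub_add_cancel]

theorem map_sub_eq_of_sub_eq_zpow_mul (hn : n ≠ 0) (hφ : IsPhi n φ) (hx : x ∈ zpows n)
    (hy : y ∈ zpows n) (hu : u ∈ zpows n) (hv : v ∈ zpows n) {k : ℤ}
    (h : v - u = (n : ℝ) ^ k * (y - x)) : φ v - φ u = φ y - φ x := by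
  rw [← hφ.map_sub hn hv hu, h, hφ.2.1 _ (zpow_mem_zpows k) _ (sub_mem_zpows hn hy hx),
    hφ.map_zpow hn, one_mul, hφ.map_sub hn hy hx]

theorem map_add_intCast_mul (hn : n ≠ 0) (hφ : IsPhi n φ) (hx : x ∈ zpows n) (i : ℤ) :
    φ (x + i * ((n : ℝ) - 1)) = φ x := by
  have hn1 : (n : ℝ) - 1 ∈ zpows n := sub_mem_zpows hn (natCast_mem_zpows n) one_mem_zpows
  rw [hφ.1 _ hx _ (mul_mem_zpows hn (intCast_mem_zpows i) hn1),
    hφ.2.1 _ (intCast_mem_zpows i) _ hn1, hφ.map_natCast_sub_one hn, mul_zero, add_zero]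

end IsPhi

theorem LocDiscrete.finite_inter_Ioo {B : Set ℝ} (hB : LocDiscrete B) (x y : ℝ) :
    (B ∩ Ioo x y).Finite := by
  by_contra hinf
  obtain ⟨z, -, hz⟩ := Set.Infinite.exists_accPt_of_subset_isCompact hinf isCompact_Icc
    (inter_subset_right.trans Ioo_subset_Icc_self)
  obtain ⟨ε, hε, hBε⟩ := hB z
  obtain ⟨w, ⟨hwz, hwB, -⟩, hwne⟩ := accPt_iff_nhds.1 hz _ (Metric.ball_mem_nhds z hε)
  exact hwne (hBε w hwB hwz)

theorem eq_of_forall_disjoint_Ioo {α β : Type*} [LinearOrder α] {Z B : Set α} {g : α → β}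
    (hBZ : B ⊆ Z) (hfin : ∀ x y, (B ∩ Ioo x y).Finite)
    (hstep : ∀ x ∈ Z, ∀ y ∈ Z, x < y → Disjoint B (Ioo x y) → g x = g y)
    {x y : α} (hx : x ∈ Z) (hy : y ∈ Z) : g x = g y := by
  have key : ∀ s : Finset α, ∀ x ∈ Z, ∀ y ∈ Z, x < y → B ∩ Ioo x y ⊆ s → g x = g y := by
    intro s
    induction s using Finset.induction_on with
    | empty =>
      intro x hx y hy hxy hs
      exact hstep x hx y hy hxy (disjoint_iff_inter_eq_empty.2 (by simpa using hs))
    | insert a s _ ih =>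
      intro x hx y hy hxy hs
      rw [Finset.coe_insert] at hs
      have hdrop : ∀ u v, Ioo u v ⊆ Ioo x y → a ∉ B ∩ Ioo u v → B ∩ Ioo u v ⊆ s :=
        fun u v huv ha => (subset_insert_iff_of_notMem ha).1
          ((inter_subset_inter_right B huv).trans hs)
      by_cases ha : a ∈ B ∩ Ioo x y
      · rw [ih x hx a (hBZ ha.1) ha.2.1 (hdrop _ _ (Ioo_subset_Ioo_right ha.2.2.le) (by simp)),
          ih a (hBZ ha.1) y hy ha.2.2 (hdrop _ _ (Ioo_subset_Ioo_left ha.2.1.le) (by simp))]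
      · exact ih x hx y hy hxy (hdrop x y subset_rfl ha)
  rcases lt_trichotomy x y with hxy | rfl | hxy
  · exact key (hfin x y).toFinset x hx y hy hxy (by simp)
  · rfl
  · exact (key (hfin y x).toFinset y hy x hx hxy (by simp)).symm

def LocallyAffineOff (n : ℕ) (B : Set ℝ) (f : ℝ → ℝ) : Prop :=
  ∀ x ∉ B, ∃ (k : ℤ) (c : ℝ), ∃ ε > 0, ∀ y : ℝ, |y - x| < ε → f y = (n : ℝ) ^ k * y + c

namespace LocallyAffineOff

variable {n : ℕ} {B : Set ℝ} {f : ℝ → ℝ}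

theorem exists_hasDerivAt (haff : LocallyAffineOff n B f) {x : ℝ} (hx : x ∉ B) :
    ∃ k : ℤ, HasDerivAt f ((n : ℝ) ^ k) x := by
  obtain ⟨k, c, ε, hε, hf⟩ := haff x hx
  refine ⟨k, ?_⟩
  have hderiv : HasDerivAt (fun y => (n : ℝ) ^ k * y + c) ((n : ℝ) ^ k) x := by
    simpa using ((hasDerivAt_id x).const_mul ((n : ℝ) ^ k)).add_const c
  exact hderiv.congr_of_eventuallyEq (Metric.eventually_nhds_iff.2 ⟨ε, hε, fun {y} hy => hf y hy⟩)

theorem exists_sub_eq_zpow_mul (haff : LocallyAffineOff n B f) (hf : Continuous f) {x y : ℝ}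
    (hxy : x < y) (hB : Disjoint B (Ioo x y)) : ∃ k : ℤ, f y - f x = (n : ℝ) ^ k * (y - x) := by
  have hderiv : ∀ z ∈ Ioo x y, ∃ k : ℤ, HasDerivAt f ((n : ℝ) ^ k) z :=
    fun z hz => haff.exists_hasDerivAt (hB.notMem_of_mem_right hz)
  obtain ⟨z, hz, hslope⟩ := exists_deriv_eq_slope f hxy hf.continuousOn
    fun z hz => (hderiv z hz).choose_spec.differentiableAt.differentiableWithinAt
  obtain ⟨k, hk⟩ := hderiv z hz
  refine ⟨k, ?_⟩
  rw [hk.deriv, eq_div_iff (sub_ne_zero.2 hxy.ne')] at hslope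
  rw [← hslope, mul_comm]

theorem exists_mem_zpows_apply_eq (haff : LocallyAffineOff n B f) (hn : 1 < n)
    (hsurj : Function.Surjective f) (hBZ : B ⊆ zpows n) (hmaps : MapsTo f (zpows n) (zpows n))
    {y : ℝ} (hy : y ∈ zpows n) : ∃ x ∈ zpows n, f x = y := by
  have hn0 : n ≠ 0 := by omega
  obtain ⟨x, rfl⟩ := hsurj y
  by_cases hxB : x ∈ B
  · exact ⟨x, hBZ hxB, rfl⟩
  obtain ⟨k, c, ε, hε, hf⟩ := haff x hxB
  obtain ⟨q, hq, hqx⟩ := exists_mem_zpows_abs_sub_lt hn x hε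
  have hc : c = f q - (n : ℝ) ^ k * q := by rw [hf q hqx]; ring
  have hcZ : c ∈ zpows n :=
    hc ▸ sub_mem_zpows hn0 (hmaps hq) (mul_mem_zpows hn0 (zpow_mem_zpows k) hq)
  have hx : x = (n : ℝ) ^ (-k) * (f x - c) := by
    rw [hf x (by simpa using hε), add_sub_cancel_right, ← mul_assoc,
      ← zpow_add₀ (Nat.cast_ne_zero.2 hn0), neg_add_cancel, zpow_zero, one_mul]
  exact ⟨x, hx ▸ mul_mem_zpows hn0 (zpow_mem_zpows _) (sub_mem_zpows hn0 hy hcZ), rfl⟩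

end LocallyAffineOff

namespace IsPhi

variable {n : ℕ} {φ : ℝ → ZMod (n - 1)} {B : Set ℝ} {f : ℝ → ℝ}

theorem map_apply_sub_map_eq (hn : n ≠ 0) (hφ : IsPhi n φ) (hf : Continuous f)
    (hBZ : B ⊆ zpows n) (hB : LocDiscrete B) (haff : LocallyAffineOff n B f)
    (hmaps : MapsTo f (zpows n) (zpows n)) {x y : ℝ} (hx : x ∈ zpows n) (hy : y ∈ zpows n) :
    φ (f x) - φ x = φ (f y) - φ y := by
  refine eq_of_forall_disjoint_Ioo (g := fun x => φ (f x) - φ x) hBZ hB.finite_inter_Ioo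
    (fun x hx y hy hxy hdisj => ?_) hx hy
  obtain ⟨k, hk⟩ := haff.exists_sub_eq_zpow_mul hf hxy hdisj
  have h := hφ.map_sub_eq_of_sub_eq_zpow_mul hn hx hy (hmaps hx) (hmaps hy) hk
  exact (sub_eq_sub_iff_sub_eq_sub.2 h).symm

theorem map_apply_eq (hn : n ≠ 0) (hφ : IsPhi n φ) (hf : Continuous f)
    (hBZ : B ⊆ zpows n) (hB : LocDiscrete B) (haff : LocallyAffineOff n B f)
    (hmaps : MapsTo f (zpows n) (zpows n)) {i : ℤ} {M : ℝ}
    (htail : ∀ x : ℝ, M < x → f x = x + (i : ℝ) * ((n : ℝ) - 1)) {x : ℝ} (hx : x ∈ zpows n) :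
    φ (f x) = φ x := by
  obtain ⟨N, hN⟩ := exists_nat_gt M
  have hdefect : φ (f N) - φ N = 0 := by
    rw [htail N hN, hφ.map_add_intCast_mul hn (natCast_mem_zpows N), sub_self]
  exact sub_eq_zero.1 ((hφ.map_apply_sub_map_eq hn hf hBZ hB haff hmaps hx
    (natCast_mem_zpows N)).trans hdefect)

end IsPhi

theorem image_setOf_mem_and_eq {α β : Type*} {Z : Set α} {f : α → α} {φ : α → β}
    (hmaps : MapsTo f Z Z) (hsurj : ∀ y ∈ Z, ∃ x ∈ Z, f x = y) (hφ : ∀ x ∈ Z, φ (f x) = φ x)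
    (c : β) : f '' {x | x ∈ Z ∧ φ x = c} = {x | x ∈ Z ∧ φ x = c} := by
  ext y
  constructor
  · rintro ⟨x, ⟨hx, rfl⟩, rfl⟩
    exact ⟨hmaps hx, hφ x hx⟩
  · rintro ⟨hy, rfl⟩
    obtain ⟨x, hx, rfl⟩ := hsurj y hy
    exact ⟨x, ⟨hx, (hφ x hx).symm⟩, rfl⟩

theorem MemBPL.memF {n : ℕ} {f : ℝ → ℝ} (hf : MemBPL n f) : MemF n f := by
  obtain ⟨hPL, M, hM⟩ := hf
  refine ⟨hPL, 0, 0, |M|, fun x hx => ?_, fun x hx => ?_⟩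
  · rw [hM x ((le_abs_self M).trans_lt (hx.trans_le (le_abs_self x)))]
    simp
  · rw [hM x ((le_abs_self M).trans_lt (lt_neg.1 hx |>.trans_le (neg_le_abs x)))]
    simp

/-- For every integer `n ≥ 2`, every element `f` of `Fₙ` (and hence every
element of `BPLₙ(ℝ)`) satisfies `φₙ(f x) = φₙ x` for all `x ∈ ℤ[1/n]`; consequently `f`
maps each coset of `Δₙ = ker φₙ` in `ℤ[1/n]` onto itself. -/
theorem stmt_2 (n : ℕ) (hn : 2 ≤ n) (φ : ℝ → ZMod (n - 1)) (hφ : IsPhi n φ)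
    (f : ℝ → ℝ) (hf : MemF n f ∨ MemBPL n f) :
    (∀ x ∈ zpows n, φ (f x) = φ x) ∧
    (∀ c : ZMod (n - 1),
      f '' {x : ℝ | x ∈ zpows n ∧ φ x = c} = {x : ℝ | x ∈ zpows n ∧ φ x = c}) := by
  obtain ⟨⟨hmono, hsurj, ⟨B, hBZ, hB, haff : LocallyAffineOff n B f⟩, hmaps⟩, i, -, M, htail, -⟩ :=
    hf.elim id MemBPL.memF
  have hcont : Continuous f := hmono.monotone.continuous_of_surjective hsurj
  have hinv : ∀ x ∈ zpows n, φ (f x) = φ x :=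
    fun x hx => hφ.map_apply_eq (by omega) hcont hBZ hB haff hmaps htail hx
  exact ⟨hinv, image_setOf_mem_and_eq hmaps
    (fun y hy => haff.exists_mem_zpows_apply_eq (by omega) hsurj hBZ hmaps hy) hinv⟩
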